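/- arXiv:2510.00752 — 5 statements merged into one kernel-verified Lean document; each statement's English description precedes it below -/
import Mathlib

section
/- Let A and B be n×n complex matrices with A positive semidefinite and B Hermitian. Then |tr(AB)| ≤ tr(A·|B|), where |B| denotes the positive semidefinite square root of B² (equivalently of BᴴB). -/
open Matrix
open scoped ComplexOrder

/-- The matrix absolute value `|A| = √(Aᴴ A)`. -/
noncomputable def matAbs {n : Type*} [Fintype n] [DecidableEq n] (A : Matrix n n ℂ) :
    Matrix n n ℂ :=
  (Matrix.posSemidef_conjTranspose_mul_self A).isHermitian.eigenvectorUnitary.1 *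
    diagonal ((↑) ∘ (√·) ∘ (Matrix.posSemidef_conjTranspose_mul_self A).isHermitian.eigenvalues) *
    (star (Matrix.posSemidef_conjTranspose_mul_self A).isHermitian.eigenvectorUnitary : Matrix n n ℂ)

/-!
Write `B = B⁺ - B⁻` with `B⁺, B⁻ ⪰ 0` (functional calculus), so that `|B| = B⁺ + B⁻`.
Since `tr(A P) ≥ 0` whenever `A, P ⪰ 0`, the triangle inequality gives
`|tr(A B⁺) - tr(A B⁻)| ≤ tr(A B⁺) + tr(A B⁻) = tr(A |B|)`.
-/

open scoped MatrixOrder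

lemma Matrix.PosSemidef.trace_mul_nonneg {𝕜 n : Type*} [RCLike 𝕜] [Fintype n] [DecidableEq n]
    {A P : Matrix n n 𝕜} (hA : A.PosSemidef) (hP : P.PosSemidef) : 0 ≤ (A * P).trace := by
  obtain ⟨S, rfl⟩ : ∃ S : Matrix n n 𝕜, P = Sᴴ * S :=
    ⟨CFC.sqrt P, by rw [← star_eq_conjTranspose, (CFC.sqrt_nonneg P).isSelfAdjoint.star_eq,
      CFC.sqrt_mul_sqrt_self P hP.nonneg]⟩
  rw [← Matrix.mul_assoc, trace_mul_comm]
  simpa only [Matrix.mul_assoc] using (hA.mul_mul_conjTranspose_same S).trace_nonneg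

lemma Complex.norm_sub_le_re_add {a b : ℂ} (ha : 0 ≤ a) (hb : 0 ≤ b) : ‖a - b‖ ≤ (a + b).re :=
  calc ‖a - b‖ ≤ ‖a‖ + ‖b‖ := norm_sub_le a b
    _ = (a + b).re := by rw [Complex.add_re, Complex.re_eq_norm.2 ha, Complex.re_eq_norm.2 hb]

lemma matAbs_eq_abs {n : Type*} [Fintype n] [DecidableEq n] (A : Matrix n n ℂ) :
    matAbs A = CFC.abs A := by
  have hP := posSemidef_conjTranspose_mul_self A
  rw [CFC.abs, star_eq_conjTranspose, CFC.sqrt_eq_cfc, cfc_nnreal_eq_real _ _ hP.nonneg,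
    hP.1.cfc_eq]
  simp only [IsHermitian.cfc, Unitary.conjStarAlgAut_apply, matAbs]
  congr 3
  funext i
  simp only [Function.comp_apply, Complex.coe_algebraMap, Real.coe_sqrt,
    Real.coe_toNNReal _ (hP.eigenvalues_nonneg i)]

/-- For `A` positive semidefinite and `B` Hermitian, `|tr(AB)| ≤ tr(A|B|)`. -/
theorem abs_trace_mul_le_trace_mul_matAbs
    {n : Type*} [Fintype n] [DecidableEq n] (A B : Matrix n n ℂ)
    (hA : A.PosSemidef) (hB : B.IsHermitian) :
    ‖(A * B).trace‖ ≤ ((A * matAbs B).trace).re := by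
  rw [matAbs_eq_abs, ← CFC.posPart_add_negPart B hB.isSelfAdjoint, mul_add, trace_add]
  conv_lhs => rw [← CFC.posPart_sub_negPart B hB.isSelfAdjoint, mul_sub, trace_sub]
  exact Complex.norm_sub_le_re_add (hA.trace_mul_nonneg (CFC.posPart_nonneg B).posSemidef)
    (hA.trace_mul_nonneg (CFC.negPart_nonneg B).posSemidef)
end

section
/- Let α ∈ (0,1) be a constant, let ρ be a density matrix, let ε₁, δ₁ ∈ (0,1), and let p₁ be a real polynomial such that |p₁(x)| ≤ 1 for all x ∈ [−1,1] and |p₁(x) − (δ₁^{1−α}/2)·x^{α−1}| ≤ ε₁ for all x ∈ [δ₁, 1]. Then ‖ρ·p₁(ρ) − (δ₁^{1−α}/2)·ρ^α‖ ≤ (3/2)δ₁ + ε₁, where ‖·‖ denotes the operator norm (largest singular value). -/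
open Matrix Polynomial
open scoped ComplexOrder Matrix.Norms.L2Operator

/-- The matrix power `A^β` of a Hermitian matrix, via the spectral decomposition:
apply `t ↦ t^β` to the eigenvalues, with the convention `0^β = 0`.
(Junk value `0` if `A` is not Hermitian.) -/
noncomputable def matPow {n : Type*} [Fintype n] [DecidableEq n]
    (A : Matrix n n ℂ) (β : ℝ) : Matrix n n ℂ :=
  if hA : A.IsHermitian then hA.cfc (fun x => if x = 0 then 0 else x ^ β) else 0

/-!
All three matrices are functions of `ρ` in the continuous functional calculus, so the norm of the
difference is the supremum of `|x p₁(x) - (δ₁^{1-α}/2) x^α|` over the spectrum of `ρ`, which lies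
in `[0, 1]`. For `x ≥ δ₁` this equals `x |p₁(x) - (δ₁^{1-α}/2) x^{α-1}| ≤ ε₁`; for `x < δ₁` the
first term is at most `x ≤ δ₁` and the second at most `δ₁^{1-α} δ₁^α / 2 = δ₁ / 2`.
-/

namespace Matrix

lemma PosSemidef.spectrum_subset_Icc_of_trace_eq_one {n : Type*} [Fintype n] [DecidableEq n]
    {ρ : Matrix n n ℂ} (hρ : ρ.PosSemidef) (hρ1 : ρ.trace = 1) :
    spectrum ℝ ρ ⊆ Set.Icc 0 1 := by
  have hsum : ∑ i, hρ.1.eigenvalues i = 1 := by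
    have := hρ.1.trace_eq_sum_eigenvalues
    rw [hρ1] at this
    simpa using (congrArg Complex.re this).symm
  intro x hx
  obtain ⟨i, rfl⟩ := hρ.1.spectrum_real_eq_range_eigenvalues ▸ hx
  exact ⟨hρ.eigenvalues_nonneg i,
    hsum ▸ Finset.single_le_sum (fun j _ => hρ.eigenvalues_nonneg j) (Finset.mem_univ i)⟩

end Matrix

lemma matPow_eq_cfc {n : Type*} [Fintype n] [DecidableEq n] {A : Matrix n n ℂ}
    (hA : A.IsHermitian) {β : ℝ} (hβ : β ≠ 0) : matPow A β = cfc (· ^ β : ℝ → ℝ) A := by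
  have : (fun x : ℝ => if x = 0 then 0 else x ^ β) = (· ^ β) := by
    ext x; split_ifs with hx <;> simp [hx, Real.zero_rpow hβ]
  rw [matPow, dif_pos hA, hA.cfc_eq, this]

lemma Real.rpow_one_sub_mul_rpow_le {α δ x : ℝ} (hα : 0 ≤ α) (hδ : 0 < δ) (hx : 0 ≤ x)
    (hxδ : x ≤ δ) : δ ^ (1 - α) * x ^ α ≤ δ :=
  calc δ ^ (1 - α) * x ^ α ≤ δ ^ (1 - α) * δ ^ α := by gcongr
    _ = δ := by rw [← Real.rpow_add hδ, sub_add_cancel, Real.rpow_one]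

lemma abs_mul_eval_sub_rpow_le {p : ℝ[X]} {α δ ε x : ℝ} (hα : 0 ≤ α) (hδ : 0 < δ) (hε : 0 ≤ ε)
    (hbdd : ∀ x ∈ Set.Icc (-1 : ℝ) 1, |p.eval x| ≤ 1)
    (happrox : ∀ x ∈ Set.Icc δ 1, |p.eval x - δ ^ (1 - α) / 2 * x ^ (α - 1)| ≤ ε)
    (hx : x ∈ Set.Icc 0 1) :
    |x * p.eval x - δ ^ (1 - α) / 2 * x ^ α| ≤ 3 / 2 * δ + ε := by
  obtain ⟨hx0, hx1⟩ := hx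
  rcases le_or_gt δ x with hδx | hxδ
  · have hfactor : x * p.eval x - δ ^ (1 - α) / 2 * x ^ α
        = x * (p.eval x - δ ^ (1 - α) / 2 * x ^ (α - 1)) := by
      have hxne : x ≠ 0 := (hδ.trans_le hδx).ne'
      have hpow : x ^ α = x ^ (α - 1) * x := by rw [← Real.rpow_add_one hxne, sub_add_cancel]
      rw [hpow]
      ring
    calc |x * p.eval x - δ ^ (1 - α) / 2 * x ^ α|
        = x * |p.eval x - δ ^ (1 - α) / 2 * x ^ (α - 1)| := by
          rw [hfactor, abs_mul, abs_of_nonneg hx0]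
      _ ≤ 1 * ε := by gcongr; exact happrox x ⟨hδx, hx1⟩
      _ ≤ 3 / 2 * δ + ε := by linarith
  · have hpoly : |x * p.eval x| ≤ δ := by
      rw [abs_mul, abs_of_nonneg hx0]
      nlinarith [hbdd x ⟨by linarith, hx1⟩, abs_nonneg (p.eval x)]
    have hpow : |δ ^ (1 - α) / 2 * x ^ α| ≤ δ / 2 := by
      rw [abs_of_nonneg (by positivity)]
      linarith [Real.rpow_one_sub_mul_rpow_le hα hδ hx0 hxδ.le]
    calc |x * p.eval x - δ ^ (1 - α) / 2 * x ^ α| ≤ δ + δ / 2 :=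
          (abs_sub _ _).trans (add_le_add hpoly hpow)
      _ ≤ 3 / 2 * δ + ε := by linarith

theorem opNorm_mul_poly_sub_smul_pow_le_general {n : Type*} [Fintype n] [DecidableEq n]
    (α ε₁ δ₁ : ℝ) (hα : α ∈ Set.Ioo (0 : ℝ) 1)
    (hδ₁ : δ₁ ∈ Set.Ioo (0 : ℝ) 1)
    (ρ : Matrix n n ℂ) (hρ : ρ.PosSemidef) (hρ1 : ρ.trace = 1)
    (p₁ : Polynomial ℝ)
    (hp₁bdd : ∀ x ∈ Set.Icc (-1 : ℝ) 1, |p₁.eval x| ≤ 1)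
    (hp₁approx : ∀ x ∈ Set.Icc δ₁ 1, |p₁.eval x - δ₁ ^ (1 - α) / 2 * x ^ (α - 1)| ≤ ε₁) :
    ‖ρ * (Polynomial.aeval ρ p₁) - (δ₁ ^ (1 - α) / 2) • matPow ρ α‖ ≤ (3 / 2) * δ₁ + ε₁ := by
  obtain ⟨hα0, -⟩ := hα
  obtain ⟨hδ0, hδ1⟩ := hδ₁
  have hε0 : 0 ≤ ε₁ := (abs_nonneg _).trans (hp₁approx 1 ⟨hδ1.le, le_rfl⟩)
  have hsa : IsSelfAdjoint ρ := hρ.1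
  have hcont (f : ℝ → ℝ) : ContinuousOn f (spectrum ℝ ρ) := ρ.finite_real_spectrum.continuousOn f
  have hcfc : ρ * Polynomial.aeval ρ p₁ - (δ₁ ^ (1 - α) / 2) • matPow ρ α
      = cfc (fun x : ℝ => x * p₁.eval x - δ₁ ^ (1 - α) / 2 * x ^ α) ρ := by
    rw [cfc_sub _ _ ρ (hcont _) (hcont _), cfc_mul _ _ ρ (hcont _) (hcont _), cfc_id' ℝ ρ,
      cfc_polynomial p₁ ρ hsa, cfc_const_mul _ _ ρ (hcont _), matPow_eq_cfc hρ.1 hα0.ne']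
  rw [hcfc]
  exact norm_cfc_le (by positivity) fun x hx => abs_mul_eval_sub_rpow_le hα0.le hδ0 hε0 hp₁bdd
    hp₁approx (hρ.spectrum_subset_Icc_of_trace_eq_one hρ1 hx)

/-- If `p₁` is bounded by 1 on `[-1,1]` and approximates `(δ₁^{1-α}/2) x^{α-1}` on `[δ₁,1]`
to within `ε₁`, then `‖ρ p₁(ρ) - (δ₁^{1-α}/2) ρ^α‖ ≤ (3/2)δ₁ + ε₁` in operator norm. -/
theorem opNorm_mul_poly_sub_smul_pow_le {n : Type*} [Fintype n] [DecidableEq n]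
    (α ε₁ δ₁ : ℝ) (hα : α ∈ Set.Ioo (0 : ℝ) 1)
    (hε₁ : ε₁ ∈ Set.Ioo (0 : ℝ) 1) (hδ₁ : δ₁ ∈ Set.Ioo (0 : ℝ) 1)
    (ρ : Matrix n n ℂ) (hρ : ρ.PosSemidef) (hρ1 : ρ.trace = 1)
    (p₁ : Polynomial ℝ)
    (hp₁bdd : ∀ x ∈ Set.Icc (-1 : ℝ) 1, |p₁.eval x| ≤ 1)
    (hp₁approx : ∀ x ∈ Set.Icc δ₁ 1, |p₁.eval x - δ₁ ^ (1 - α) / 2 * x ^ (α - 1)| ≤ ε₁) :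
    ‖ρ * (Polynomial.aeval ρ p₁) - (δ₁ ^ (1 - α) / 2) • matPow ρ α‖ ≤ (3 / 2) * δ₁ + ε₁ :=
  opNorm_mul_poly_sub_smul_pow_le_general α ε₁ δ₁ hα hδ₁ ρ hρ hρ1 p₁ hp₁bdd hp₁approx
end

section
/- Let α ∈ (0,1) be a constant, let r be a positive integer, let ρ and σ be r×r density matrices, let ε₁, δ₁, ε₂ ∈ (0,1), let p₁ be a real polynomial with |p₁(x)| ≤ 1 for all x ∈ [−1,1] and |p₁(x) − (δ₁^{1−α}/2)·x^{α−1}| ≤ ε₁ for all x ∈ [δ₁,1], and let p₂ be a real polynomial with |p₂(x)| ≤ 1 for all x ∈ [−1,1] and |p₂(x) − (1/2)x^{1−α}| ≤ ε₂ for all x ∈ [0,1]. Then |tr(ρ·p₁(ρ)·p₂(σ)) − (δ₁^{1−α}/2)·tr(ρ^α·p₂(σ))| ≤ (r·ε₂ + r^α/2)·((3/2)δ₁ + ε₁). -/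
/-! Diagonalize `ρ = U diag(λ) U*` and `σ = V diag(μ) V*`. For `W = U* V` every column has unit
norm, and `tr(f(ρ) g(σ)) = ∑ i j, f(λᵢ) g(μⱼ) |Wᵢⱼ|²`, so `|tr(f(ρ) g(σ))| ≤ maxᵢ |f(λᵢ)| · ∑ⱼ |g(μⱼ)|`.
Take `f(t) = t p₁(t) - (δ₁^{1-α}/2) t^α`, which is at most `(3/2)δ₁ + ε₁` on `[0, 1]` (below `δ₁`
both terms are small, above it `p₁` approximates `δ₁^{1-α}/2 · t^{α-1}`), and `g = p₂`, for which
`∑ⱼ |p₂(μⱼ)| ≤ r ε₂ + ∑ⱼ μⱼ^{1-α}/2 ≤ r ε₂ + r^α/2` by concavity of `t ↦ t^{1-α}`. -/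

open Matrix Polynomial
open scoped ComplexOrder

namespace Matrix

variable {n 𝕜 : Type*} [Fintype n] [DecidableEq n] [RCLike 𝕜]

lemma sum_norm_sq_apply_eq_one_of_mem_unitaryGroup {W : Matrix n n 𝕜}
    (hW : W ∈ unitaryGroup n 𝕜) (j : n) : ∑ i, ‖W i j‖ ^ 2 = 1 := by
  have h : (star W * W) j j = 1 := by rw [Unitary.star_mul_self_of_mem hW, one_apply_eq]
  simp only [mul_apply, star_apply, ← starRingEnd_apply, RCLike.conj_mul] at h
  exact_mod_cast h

lemma trace_diagonal_mul_mul_diagonal_mul_star (a b : n → 𝕜) (W : Matrix n n 𝕜) :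
    (diagonal a * W * diagonal b * star W).trace = ∑ i, ∑ j, a i * b j * (‖W i j‖ ^ 2 : ℝ) := by
  simp only [trace, diag_apply, mul_apply (M := diagonal a * W * diagonal b), mul_diagonal,
    diagonal_mul, star_apply, ← starRingEnd_apply]
  refine Finset.sum_congr rfl fun i _ => Finset.sum_congr rfl fun j _ => ?_
  rw [RCLike.ofReal_pow, ← RCLike.mul_conj]
  ring

lemma trace_conj_diagonal_mul_conj_diagonal (U V : Matrix n n 𝕜) (a b : n → 𝕜) :
    (U * diagonal a * star U * (V * diagonal b * star V)).trace =
      ∑ i, ∑ j, a i * b j * (‖(star U * V) i j‖ ^ 2 : ℝ) := by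
  rw [← trace_diagonal_mul_mul_diagonal_mul_star, star_mul, star_star]
  simp only [Matrix.mul_assoc]
  rw [Matrix.trace_mul_comm U]
  simp only [Matrix.mul_assoc]

namespace IsHermitian

variable {A B : Matrix n n 𝕜}

lemma trace_cfc_mul_cfc (hA : A.IsHermitian) (hB : B.IsHermitian) (f g : ℝ → ℝ) :
    (hA.cfc f * hB.cfc g).trace = ∑ i, ∑ j, (f (hA.eigenvalues i) * g (hB.eigenvalues j) *
      ‖(star (hA.eigenvectorUnitary : Matrix n n 𝕜) * hB.eigenvectorUnitary) i j‖ ^ 2 : ℝ) := by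
  rw [IsHermitian.cfc, IsHermitian.cfc, Unitary.conjStarAlgAut_apply,
    Unitary.conjStarAlgAut_apply, trace_conj_diagonal_mul_conj_diagonal]
  push_cast
  rfl

lemma norm_trace_cfc_mul_cfc_le (hA : A.IsHermitian) (hB : B.IsHermitian) {f : ℝ → ℝ}
    (g : ℝ → ℝ) {K : ℝ} (hf : ∀ i, |f (hA.eigenvalues i)| ≤ K) :
    ‖(hA.cfc f * hB.cfc g).trace‖ ≤ K * ∑ j, |g (hB.eigenvalues j)| := by
  set W : Matrix n n 𝕜 := star (hA.eigenvectorUnitary : Matrix n n 𝕜) * hB.eigenvectorUnitary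
  have hW : W ∈ unitaryGroup n 𝕜 := (star hA.eigenvectorUnitary * hB.eigenvectorUnitary).2
  rw [trace_cfc_mul_cfc, RCLike.norm_ofReal]
  calc _ ≤ ∑ i, ∑ j, |f (hA.eigenvalues i)| * |g (hB.eigenvalues j)| * ‖W i j‖ ^ 2 := by
        refine (Finset.abs_sum_le_sum_abs _ _).trans <| Finset.sum_le_sum fun i _ => ?_
        refine (Finset.abs_sum_le_sum_abs _ _).trans <| Finset.sum_le_sum fun j _ => ?_
        rw [abs_mul, abs_mul, abs_pow, abs_norm]
    _ ≤ ∑ i, ∑ j, K * |g (hB.eigenvalues j)| * ‖W i j‖ ^ 2 := by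
        gcongr with i j
        exact hf i
    _ = K * ∑ j, |g (hB.eigenvalues j)| := by
        rw [Finset.sum_comm]
        simp_rw [← Finset.mul_sum, sum_norm_sq_apply_eq_one_of_mem_unitaryGroup hW, mul_one,
          ← Finset.mul_sum]

end IsHermitian

lemma IsHermitian.aeval_eq_cfc {A : Matrix n n 𝕜} (hA : A.IsHermitian) (q : ℝ[X]) :
    aeval A q = hA.cfc q.eval := by
  rw [← cfc_polynomial q A hA.isSelfAdjoint, hA.cfc_eq]

lemma PosSemidef.sum_eigenvalues_eq_one {A : Matrix n n 𝕜} (hA : A.PosSemidef)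
    (h : A.trace = 1) : ∑ i, hA.1.eigenvalues i = 1 := by
  exact_mod_cast hA.1.trace_eq_sum_eigenvalues.symm.trans h

lemma PosSemidef.eigenvalues_mem_Icc {A : Matrix n n 𝕜} (hA : A.PosSemidef)
    (h : A.trace = 1) (i : n) : hA.1.eigenvalues i ∈ Set.Icc 0 1 :=
  ⟨hA.eigenvalues_nonneg i, hA.sum_eigenvalues_eq_one h ▸
    Finset.single_le_sum (fun j _ => hA.eigenvalues_nonneg j) (Finset.mem_univ i)⟩

end Matrix

lemma matPow_eq_cfc_rpow {n : Type*} [Fintype n] [DecidableEq n] {A : Matrix n n ℂ}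
    (hA : A.IsHermitian) {β : ℝ} (hβ : β ≠ 0) : matPow A β = hA.cfc (· ^ β) := by
  rw [matPow, dif_pos hA]
  congr 1
  ext x
  split_ifs with hx
  · rw [hx, Real.zero_rpow hβ]
  · rfl

lemma mul_aeval_sub_smul_matPow_eq_cfc {n : Type*} [Fintype n] [DecidableEq n]
    {A : Matrix n n ℂ} (hA : A.IsHermitian) (q : ℝ[X]) (c : ℝ) {β : ℝ} (hβ : β ≠ 0) :
    A * aeval A q - c • matPow A β = hA.cfc (fun t => t * q.eval t - c * t ^ β) := by
  have hcont (f : ℝ → ℝ) : ContinuousOn f (spectrum ℝ A) := A.finite_real_spectrum.continuousOn f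
  rw [matPow_eq_cfc_rpow hA hβ, ← hA.cfc_eq, ← hA.cfc_eq, cfc_sub (hf := hcont _) (hg := hcont _),
    cfc_mul (fun t => t) _, cfc_id' ℝ A hA.isSelfAdjoint, cfc_polynomial q A hA.isSelfAdjoint,
    cfc_const_mul c (· ^ β) A (hcont _)]

lemma Real.sum_rpow_le_card_rpow {ι : Type*} [Fintype ι] {x : ι → ℝ} (hx : ∀ i, 0 ≤ x i)
    (hsum : ∑ i, x i = 1) {p : ℝ} (hp₀ : 0 ≤ p) (hp₁ : p ≤ 1) :
    ∑ i, x i ^ p ≤ (Fintype.card ι : ℝ) ^ (1 - p) := by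
  have hcard : (0 : ℝ) < Fintype.card ι := by
    have : Nonempty ι := by
      by_contra h
      simp [not_nonempty_iff.mp h] at hsum
    exact_mod_cast Fintype.card_pos
  set N : ℝ := ((Fintype.card ι : ℕ) : ℝ)
  have hjensen := (Real.concaveOn_rpow hp₀ hp₁).le_map_sum (t := Finset.univ)
    (w := fun _ => N⁻¹) (p := x) (fun _ _ => by positivity)
    (by simp [Finset.sum_const, N, hcard.ne']) (fun i _ => Set.mem_Ici.mpr (hx i))
  simp only [smul_eq_mul, ← Finset.mul_sum, hsum, mul_one] at hjensen
  rw [Real.inv_rpow hcard.le, inv_mul_le_iff₀ hcard] at hjensen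
  calc ∑ i, x i ^ p ≤ N * (N ^ p)⁻¹ := hjensen
    _ = N ^ (1 - p) := by rw [Real.rpow_sub hcard, Real.rpow_one, div_eq_mul_inv]

lemma abs_mul_sub_mul_rpow_le {f : ℝ → ℝ} {α δ ε t : ℝ} (hα : 0 ≤ α) (hδ : 0 < δ) (hε : 0 ≤ ε)
    (hf_bdd : ∀ x ∈ Set.Ico 0 δ, |f x| ≤ 1)
    (hf_approx : ∀ x ∈ Set.Icc δ 1, |f x - δ ^ (1 - α) / 2 * x ^ (α - 1)| ≤ ε)
    (ht : t ∈ Set.Icc 0 1) :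
    |t * f t - δ ^ (1 - α) / 2 * t ^ α| ≤ 3 / 2 * δ + ε := by
  obtain ⟨ht₀, ht₁⟩ := ht
  rcases lt_or_ge t δ with htδ | hδt
  · have hf : |t * f t| ≤ δ := by
      rw [abs_mul, abs_of_nonneg ht₀]
      nlinarith [hf_bdd t ⟨ht₀, htδ⟩, abs_nonneg (f t)]
    have hpow : δ ^ (1 - α) / 2 * t ^ α ≤ δ / 2 := by
      calc δ ^ (1 - α) / 2 * t ^ α ≤ δ ^ (1 - α) / 2 * δ ^ α := by gcongr
        _ = δ / 2 := by rw [div_mul_eq_mul_div, ← Real.rpow_add hδ]; norm_num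
    have hpow₀ : 0 ≤ δ ^ (1 - α) / 2 * t ^ α := by positivity
    calc |t * f t - δ ^ (1 - α) / 2 * t ^ α|
        ≤ |t * f t| + |δ ^ (1 - α) / 2 * t ^ α| := abs_sub _ _
      _ ≤ δ + δ / 2 := by rw [abs_of_nonneg hpow₀]; gcongr
      _ ≤ 3 / 2 * δ + ε := by linarith
  · have ht_pos : 0 < t := hδ.trans_le hδt
    have hsplit : t * f t - δ ^ (1 - α) / 2 * t ^ α
        = t * (f t - δ ^ (1 - α) / 2 * t ^ (α - 1)) := by
      rw [mul_sub, Real.rpow_sub_one ht_pos.ne']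
      field_simp
    calc |t * f t - δ ^ (1 - α) / 2 * t ^ α|
        = t * |f t - δ ^ (1 - α) / 2 * t ^ (α - 1)| := by rw [hsplit, abs_mul, abs_of_pos ht_pos]
      _ ≤ 1 * ε := by gcongr; exact hf_approx t ⟨hδt, ht₁⟩
      _ ≤ 3 / 2 * δ + ε := by linarith

lemma sum_abs_le_card_mul_add_card_rpow {ι : Type*} [Fintype ι] {x y : ι → ℝ} {β ε : ℝ}
    (hx : ∀ i, 0 ≤ x i) (hsum : ∑ i, x i = 1) (hβ₀ : 0 ≤ β) (hβ₁ : β ≤ 1)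
    (hy : ∀ i, |y i - 1 / 2 * x i ^ β| ≤ ε) :
    ∑ i, |y i| ≤ Fintype.card ι * ε + (Fintype.card ι : ℝ) ^ (1 - β) / 2 := by
  calc ∑ i, |y i| ≤ ∑ i, (ε + x i ^ β / 2) := by
        refine Finset.sum_le_sum fun i _ => ?_
        have h := abs_sub_abs_le_abs_sub (y i) (1 / 2 * x i ^ β)
        rw [abs_of_nonneg (mul_nonneg one_half_pos.le (Real.rpow_nonneg (hx i) β))] at h
        linarith [hy i]
    _ = Fintype.card ι * ε + (∑ i, x i ^ β) / 2 := by
        rw [Finset.sum_add_distrib, Finset.sum_div, Finset.sum_const, Finset.card_univ,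
          nsmul_eq_mul]
    _ ≤ Fintype.card ι * ε + (Fintype.card ι : ℝ) ^ (1 - β) / 2 := by
        gcongr
        exact Real.sum_rpow_le_card_rpow hx hsum hβ₀ hβ₁

theorem abs_trace_poly_approx_le_general {r : ℕ}
    (α ε₁ δ₁ ε₂ : ℝ) (hα : α ∈ Set.Ioo (0 : ℝ) 1)
    (hε₁ : ε₁ ∈ Set.Ioo (0 : ℝ) 1) (hδ₁ : δ₁ ∈ Set.Ioo (0 : ℝ) 1)
    (ρ σ : Matrix (Fin r) (Fin r) ℂ)
    (hρ : ρ.PosSemidef) (hρ1 : ρ.trace = 1)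
    (hσ : σ.PosSemidef) (hσ1 : σ.trace = 1)
    (p₁ p₂ : Polynomial ℝ)
    (hp₁bdd : ∀ x ∈ Set.Icc (-1 : ℝ) 1, |p₁.eval x| ≤ 1)
    (hp₁approx : ∀ x ∈ Set.Icc δ₁ 1, |p₁.eval x - δ₁ ^ (1 - α) / 2 * x ^ (α - 1)| ≤ ε₁)
    (hp₂approx : ∀ x ∈ Set.Icc (0 : ℝ) 1, |p₂.eval x - (1 / 2) * x ^ (1 - α)| ≤ ε₂) :
    ‖(ρ * Polynomial.aeval ρ p₁ * Polynomial.aeval σ p₂).trace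
        - ((δ₁ ^ (1 - α) / 2 : ℝ) : ℂ) * (matPow ρ α * Polynomial.aeval σ p₂).trace‖
      ≤ ((r : ℝ) * ε₂ + (r : ℝ) ^ α / 2) * ((3 / 2) * δ₁ + ε₁) := by
  have hσ_eig := hσ.eigenvalues_mem_Icc hσ1
  rw [← Complex.real_smul, ← trace_smul, ← trace_sub, ← Matrix.smul_mul, ← Matrix.sub_mul,
    mul_aeval_sub_smul_matPow_eq_cfc hρ.1 p₁ _ hα.1.ne', hσ.1.aeval_eq_cfc, mul_comm]
  refine (hρ.1.norm_trace_cfc_mul_cfc_le hσ.1 _ fun i =>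
    abs_mul_sub_mul_rpow_le hα.1.le hδ₁.1 hε₁.1.le
      (fun x hx => hp₁bdd x ⟨by linarith [hx.1], by linarith [hx.2, hδ₁.2]⟩)
      hp₁approx (hρ.eigenvalues_mem_Icc hρ1 i)).trans ?_
  have hp₂_sum := sum_abs_le_card_mul_add_card_rpow (fun j => (hσ_eig j).1)
    (hσ.sum_eigenvalues_eq_one hσ1) (sub_nonneg.2 hα.2.le) (by linarith [hα.1])
    (fun j => hp₂approx _ (hσ_eig j))
  rw [Fintype.card_fin, sub_sub_cancel] at hp₂_sum
  gcongr
  linarith [hδ₁.1, hε₁.1]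

/-- `|tr(ρ p₁(ρ) p₂(σ)) - (δ₁^{1-α}/2) tr(ρ^α p₂(σ))| ≤ (r ε₂ + r^α/2)((3/2)δ₁ + ε₁)`. -/
theorem abs_trace_poly_approx_le {r : ℕ} (hr : 0 < r)
    (α ε₁ δ₁ ε₂ : ℝ) (hα : α ∈ Set.Ioo (0 : ℝ) 1)
    (hε₁ : ε₁ ∈ Set.Ioo (0 : ℝ) 1) (hδ₁ : δ₁ ∈ Set.Ioo (0 : ℝ) 1)
    (hε₂ : ε₂ ∈ Set.Ioo (0 : ℝ) 1)
    (ρ σ : Matrix (Fin r) (Fin r) ℂ)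
    (hρ : ρ.PosSemidef) (hρ1 : ρ.trace = 1)
    (hσ : σ.PosSemidef) (hσ1 : σ.trace = 1)
    (p₁ p₂ : Polynomial ℝ)
    (hp₁bdd : ∀ x ∈ Set.Icc (-1 : ℝ) 1, |p₁.eval x| ≤ 1)
    (hp₁approx : ∀ x ∈ Set.Icc δ₁ 1, |p₁.eval x - δ₁ ^ (1 - α) / 2 * x ^ (α - 1)| ≤ ε₁)
    (hp₂bdd : ∀ x ∈ Set.Icc (-1 : ℝ) 1, |p₂.eval x| ≤ 1)
    (hp₂approx : ∀ x ∈ Set.Icc (0 : ℝ) 1, |p₂.eval x - (1 / 2) * x ^ (1 - α)| ≤ ε₂) :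
    ‖(ρ * Polynomial.aeval ρ p₁ * Polynomial.aeval σ p₂).trace
        - ((δ₁ ^ (1 - α) / 2 : ℝ) : ℂ) * (matPow ρ α * Polynomial.aeval σ p₂).trace‖
      ≤ ((r : ℝ) * ε₂ + (r : ℝ) ^ α / 2) * ((3 / 2) * δ₁ + ε₁) :=
  abs_trace_poly_approx_le_general α ε₁ δ₁ ε₂ hα hε₁ hδ₁ ρ σ hρ hρ1 hσ hσ1 p₁ p₂ hp₁bdd hp₁approx
    hp₂approx
end

section
/- Let α ∈ (0,1) be a constant, let ρ be a density matrix, let ε₁, δ₁ ∈ (0,1), and let p₁ be a real polynomial such that |p₁(x)| ≤ 1 for all x ∈ [−1,1] and |p₁(x) − (δ₁^{1−α}/2)·x^{α−1}| ≤ ε₁ for all x ∈ [δ₁, 1]. Then ‖ρ·p₁(ρ/2) − δ₁^{1−α}·(ρ/2)^α‖ ≤ 4δ₁ + ε₁, where ‖·‖ denotes the operator norm (largest singular value). -/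
/-!
With `A = ρ / 2`, every matrix in the statement is a continuous function of `A`, so the
operator norm is the sup over the spectrum of `A` of `|2x p₁(x) - δ₁^{1-α} x^α|`. Since `ρ` is
a density matrix, that spectrum lies in `[0, 1/2]`. For `x ≥ δ₁` the expression factors as
`2x (p₁(x) - (δ₁^{1-α}/2) x^{α-1})`, bounded by `ε₁`; for `x ≤ δ₁` both terms are small
(`2x |p₁(x)| ≤ 2δ₁` and `δ₁^{1-α} x^α ≤ δ₁`).
-/

open Matrix Polynomial
open scoped ComplexOrder Matrix.Norms.L2Operator

namespace Matrix

variable {n 𝕜 : Type*} [Fintype n] [DecidableEq n] [RCLike 𝕜]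

theorem PosSemidef.eigenvalues_le_re_trace {A : Matrix n n 𝕜} (hA : A.PosSemidef) (i : n) :
    hA.isHermitian.eigenvalues i ≤ RCLike.re A.trace := by
  rw [hA.isHermitian.trace_eq_sum_eigenvalues, map_sum]
  simp only [RCLike.ofReal_re]
  exact Finset.single_le_sum (fun j _ => hA.eigenvalues_nonneg j) (Finset.mem_univ i)

theorem PosSemidef.spectrum_subset_Icc_re_trace {A : Matrix n n 𝕜} (hA : A.PosSemidef) :
    spectrum ℝ A ⊆ Set.Icc 0 (RCLike.re A.trace) := by
  rw [hA.isHermitian.spectrum_real_eq_range_eigenvalues]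
  rintro _ ⟨i, rfl⟩
  exact ⟨hA.eigenvalues_nonneg i, hA.eigenvalues_le_re_trace i⟩

theorem IsHermitian.matPow_eq_cfc {A : Matrix n n ℂ} (hA : A.IsHermitian) {β : ℝ} (hβ : β ≠ 0) :
    matPow A β = cfc (· ^ β : ℝ → ℝ) A := by
  rw [matPow, dif_pos hA, hA.cfc_eq]
  congr 1
  funext x
  split_ifs with hx
  · rw [hx, Real.zero_rpow hβ]
  · rfl

end Matrix

section Scalar

variable {α δ ε x : ℝ} {p : ℝ[X]}

theorem abs_two_mul_eval_sub_rpow_le_of_approx (hδ : 0 < δ)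
    (hp : ∀ x ∈ Set.Icc δ 1, |p.eval x - δ ^ (1 - α) / 2 * x ^ (α - 1)| ≤ ε)
    (hδx : δ ≤ x) (hx : x ≤ 1 / 2) :
    |2 * x * p.eval x - δ ^ (1 - α) * x ^ α| ≤ ε := by
  have hx0 : 0 < x := hδ.trans_le hδx
  have hfactor : 2 * x * p.eval x - δ ^ (1 - α) * x ^ α
      = 2 * x * (p.eval x - δ ^ (1 - α) / 2 * x ^ (α - 1)) := by
    rw [Real.rpow_sub_one hx0.ne']
    field_simp
  rw [hfactor, abs_mul, abs_of_pos (by positivity)]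
  calc 2 * x * |p.eval x - δ ^ (1 - α) / 2 * x ^ (α - 1)| ≤ 1 * ε := by
        gcongr
        · linarith
        · exact hp x ⟨hδx, by linarith⟩
    _ = ε := one_mul ε

theorem abs_two_mul_eval_sub_rpow_le_of_bdd (hα : 0 ≤ α) (hδ : 0 < δ)
    (hp : ∀ x ∈ Set.Icc (-1 : ℝ) 1, |p.eval x| ≤ 1)
    (hx0 : 0 ≤ x) (hxδ : x ≤ δ) (hx : x ≤ 1) :
    |2 * x * p.eval x - δ ^ (1 - α) * x ^ α| ≤ 3 * δ := by
  have hpx : |2 * x * p.eval x| ≤ 2 * δ := by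
    rw [abs_mul, abs_of_nonneg (by positivity)]
    calc 2 * x * |p.eval x| ≤ 2 * δ * 1 := by
          gcongr
          exact hp x ⟨by linarith, hx⟩
      _ = 2 * δ := mul_one _
  have hpow : |δ ^ (1 - α) * x ^ α| ≤ δ := by
    rw [abs_of_nonneg (by positivity)]
    calc δ ^ (1 - α) * x ^ α ≤ δ ^ (1 - α) * δ ^ α := by gcongr
      _ = δ := by rw [← Real.rpow_add hδ, sub_add_cancel, Real.rpow_one]
  linarith [abs_sub (2 * x * p.eval x) (δ ^ (1 - α) * x ^ α)]

theorem abs_two_mul_eval_sub_rpow_le_max (hα : 0 ≤ α) (hδ : 0 < δ)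
    (hp_bdd : ∀ x ∈ Set.Icc (-1 : ℝ) 1, |p.eval x| ≤ 1)
    (hp_approx : ∀ x ∈ Set.Icc δ 1, |p.eval x - δ ^ (1 - α) / 2 * x ^ (α - 1)| ≤ ε)
    (hx : x ∈ Set.Icc 0 (1 / 2)) :
    |2 * x * p.eval x - δ ^ (1 - α) * x ^ α| ≤ max (3 * δ) ε := by
  rcases le_total x δ with hxδ | hδx
  · exact (abs_two_mul_eval_sub_rpow_le_of_bdd hα hδ hp_bdd hx.1 hxδ (by linarith [hx.2])).trans
      (le_max_left _ _)
  · exact (abs_two_mul_eval_sub_rpow_le_of_approx hδ hp_approx hδx hx.2).trans (le_max_right _ _)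

end Scalar

/-- If `p₁` is bounded by 1 on `[-1,1]` and approximates `(δ₁^{1-α}/2) x^{α-1}` on `[δ₁,1]`
to within `ε₁`, then `‖ρ p₁(ρ/2) - δ₁^{1-α} (ρ/2)^α‖ ≤ 4δ₁ + ε₁` in operator norm. -/
theorem opNorm_mul_poly_half_sub_smul_pow_le {n : Type*} [Fintype n] [DecidableEq n]
    (α ε₁ δ₁ : ℝ) (hα : α ∈ Set.Ioo (0 : ℝ) 1)
    (hε₁ : ε₁ ∈ Set.Ioo (0 : ℝ) 1) (hδ₁ : δ₁ ∈ Set.Ioo (0 : ℝ) 1)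
    (ρ : Matrix n n ℂ) (hρ : ρ.PosSemidef) (hρ1 : ρ.trace = 1)
    (p₁ : Polynomial ℝ)
    (hp₁bdd : ∀ x ∈ Set.Icc (-1 : ℝ) 1, |p₁.eval x| ≤ 1)
    (hp₁approx : ∀ x ∈ Set.Icc δ₁ 1, |p₁.eval x - δ₁ ^ (1 - α) / 2 * x ^ (α - 1)| ≤ ε₁) :
    ‖ρ * Polynomial.aeval ((1 / 2 : ℝ) • ρ) p₁
        - δ₁ ^ (1 - α) • matPow ((1 / 2 : ℝ) • ρ) α‖ ≤ 4 * δ₁ + ε₁ := by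
  set A : Matrix n n ℂ := (1 / 2 : ℝ) • ρ with hA_def
  have hA : A.PosSemidef := hρ.smul (by norm_num)
  have hA_sa : IsSelfAdjoint A := hA.isHermitian
  have hA_spec : spectrum ℝ A ⊆ Set.Icc 0 (1 / 2) := by
    convert hA.spectrum_subset_Icc_re_trace
    simp [hA_def, trace_smul, hρ1]
  have hρ_eq : ρ = cfc (fun x : ℝ => 2 * x) A := by
    rw [cfc_const_mul_id 2 A hA_sa, hA_def, smul_smul]
    norm_num
  have hcont (f : ℝ → ℝ) : ContinuousOn f (spectrum ℝ A) := finite_real_spectrum.continuousOn f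
  rw [hρ_eq, ← cfc_polynomial p₁ A hA_sa, hA.isHermitian.matPow_eq_cfc hα.1.ne',
    ← cfc_mul _ _ A (hcont _) (hcont _), ← cfc_smul _ _ A (hcont _),
    ← cfc_sub _ _ A (hcont _) (hcont _)]
  refine norm_cfc_le (by linarith [hδ₁.1, hε₁.1]) fun x hx => ?_
  calc ‖2 * x * p₁.eval x - δ₁ ^ (1 - α) • x ^ α‖ ≤ max (3 * δ₁) ε₁ :=
        abs_two_mul_eval_sub_rpow_le_max hα.1.le hδ₁.1 hp₁bdd hp₁approx (hA_spec hx)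
    _ ≤ 4 * δ₁ + ε₁ := max_le (by linarith [hδ₁.1, hε₁.1]) (by linarith [hδ₁.1])
end

section
/- Let α ∈ (0,1) and x ∈ [0,1]. Then (1+x)^α + (1−x)^α ≤ 2 − α(1−α)x². -/
/-!
The function `f t = (1 + t) ^ α + (1 - t) ^ α + α (1 - α) t²` is even and concave on `[-1, 1]`:
its second derivative is `α (1 - α) (2 - (1 + t) ^ (α - 2) - (1 - t) ^ (α - 2))`, and by AM-GM
`(1 + t) ^ β + (1 - t) ^ β ≥ 2 ((1 - t²) ^ β) ^ (1 / 2) ≥ 2` for `β ≤ 0`.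
Hence `f x = (f x + f (-x)) / 2 ≤ f 0 = 2`.
-/

open Real Set

lemma two_le_one_add_rpow_add_one_sub_rpow {β t : ℝ} (hβ : β ≤ 0) (ht : t ∈ Ioo (-1) 1) :
    2 ≤ (1 + t) ^ β + (1 - t) ^ β := by
  obtain ⟨ht₀, ht₁⟩ := ht
  have hplus : 0 < 1 + t := by linarith
  have hminus : 0 < 1 - t := by linarith
  have hprod : 1 ≤ (1 + t) ^ β * (1 - t) ^ β := by
    rw [← mul_rpow hplus.le hminus.le]
    exact one_le_rpow_of_pos_of_le_one_of_nonpos (by nlinarith) (by nlinarith [sq_nonneg t]) hβ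
  nlinarith [sq_nonneg ((1 + t) ^ β - (1 - t) ^ β), rpow_pos_of_pos hplus β,
    rpow_pos_of_pos hminus β]

lemma hasDerivAt_one_add_rpow_add_one_sub_rpow (p : ℝ) {t : ℝ} (ht : t ∈ Ioo (-1) 1) :
    HasDerivAt (fun t : ℝ => (1 + t) ^ p + (1 - t) ^ p)
      (p * ((1 + t) ^ (p - 1) - (1 - t) ^ (p - 1))) t := by
  have hplus := ((hasDerivAt_id' t).const_add 1).rpow_const (p := p) (Or.inl (by linarith [ht.1]))
  have hminus := ((hasDerivAt_id' t).const_sub 1).rpow_const (p := p) (Or.inl (by linarith [ht.2]))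
  exact (hplus.add hminus).congr_deriv (by ring)

lemma hasDerivAt_one_add_rpow_sub_one_sub_rpow (p : ℝ) {t : ℝ} (ht : t ∈ Ioo (-1) 1) :
    HasDerivAt (fun t : ℝ => (1 + t) ^ p - (1 - t) ^ p)
      (p * ((1 + t) ^ (p - 1) + (1 - t) ^ (p - 1))) t := by
  have hplus := ((hasDerivAt_id' t).const_add 1).rpow_const (p := p) (Or.inl (by linarith [ht.1]))
  have hminus := ((hasDerivAt_id' t).const_sub 1).rpow_const (p := p) (Or.inl (by linarith [ht.2]))
  exact (hplus.sub hminus).congr_deriv (by ring)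

lemma concaveOn_one_add_rpow_add_one_sub_rpow_add_sq {α : ℝ} (hα₀ : 0 ≤ α)
    (hα₁ : α ≤ 1) :
    ConcaveOn ℝ (Icc (-1) 1)
      (fun t : ℝ => (1 + t) ^ α + (1 - t) ^ α + α * (1 - α) * t ^ 2) := by
  have hcont : Continuous fun t : ℝ => (1 + t) ^ α + (1 - t) ^ α + α * (1 - α) * t ^ 2 := by
    fun_prop (disch := exact Or.inr hα₀)
  have hsq (c t : ℝ) : HasDerivAt (fun t : ℝ => c * t ^ 2) (c * 2 * t) t :=
    ((hasDerivAt_pow 2 t).const_mul c).congr_deriv (by simp [mul_assoc])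
  refine concaveOn_of_hasDerivWithinAt2_nonpos (convex_Icc _ _) hcont.continuousOn
    (f' := fun t => α * ((1 + t) ^ (α - 1) - (1 - t) ^ (α - 1)) + α * (1 - α) * 2 * t)
    (f'' := fun t => α * ((α - 1) * ((1 + t) ^ (α - 1 - 1) + (1 - t) ^ (α - 1 - 1)))
      + α * (1 - α) * 2) ?_ ?_ ?_ <;> rw [interior_Icc] <;> intro t ht
  · exact ((hasDerivAt_one_add_rpow_add_one_sub_rpow α ht).add (hsq _ t)).hasDerivWithinAt
  · refine (((hasDerivAt_one_add_rpow_sub_one_sub_rpow (α - 1) ht).const_mul α).add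
      ((hasDerivAt_id' t).const_mul (α * (1 - α) * 2))).hasDerivWithinAt.congr_deriv ?_
    ring
  · have hsum := two_le_one_add_rpow_add_one_sub_rpow (β := α - 1 - 1) (by linarith) ht
    have hcoef : 0 ≤ α * (1 - α) := mul_nonneg hα₀ (by linarith)
    calc _ = -(α * (1 - α)) * ((1 + t) ^ (α - 1 - 1) + (1 - t) ^ (α - 1 - 1) - 2) := by ring
      _ ≤ 0 := mul_nonpos_of_nonpos_of_nonneg (neg_nonpos.2 hcoef) (by linarith)

lemma ConcaveOn.le_map_zero_of_map_neg_eq {E : Type*} [AddCommGroup E] [Module ℝ E] {s : Set E}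
    {f : E → ℝ} (hf : ConcaveOn ℝ s f) {x : E} (hx : x ∈ s) (hx' : -x ∈ s)
    (heven : f (-x) = f x) : f x ≤ f 0 := by
  have hmid := hf.2 hx hx' (by norm_num : (0 : ℝ) ≤ 1 / 2) (by norm_num : (0 : ℝ) ≤ 1 / 2)
    (by norm_num)
  rw [heven, smul_neg, add_neg_cancel, ← add_smul] at hmid
  norm_num at hmid
  exact hmid

/-- For `α ∈ (0,1)` and `x ∈ [0,1]`, `(1+x)^α + (1-x)^α ≤ 2 - α(1-α)x²`,
where `^` denotes the real power. -/
theorem rpow_add_rpow_le (α x : ℝ) (hα : α ∈ Set.Ioo (0 : ℝ) 1)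
    (hx : x ∈ Set.Icc (0 : ℝ) 1) :
    (1 + x) ^ α + (1 - x) ^ α ≤ 2 - α * (1 - α) * x ^ 2 := by
  have hconc := concaveOn_one_add_rpow_add_one_sub_rpow_add_sq hα.1.le hα.2.le
  have key := hconc.le_map_zero_of_map_neg_eq (x := x) ⟨by linarith [hx.1], hx.2⟩
    ⟨by linarith [hx.2], by linarith [hx.1]⟩
    (by simp only [← sub_eq_add_neg, sub_neg_eq_add, neg_sq]; ring)
  norm_num at key
  linarith
end
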